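/- arXiv:2512.08278 — 2 statements merged into one kernel-verified Lean document; each statement's English description precedes it below -/
import Mathlib

section
/- Let p be a prime, g ∈ 𝔽_p[[T]] a power series with zero constant coefficient, α ∈ ℤ_p, and u ∈ ℕ. Then (1+g)^{p^u·α} = (1 + g^{p^u})^α in 𝔽_p[[T]]. (The Frobenius manipulation used in the proof of the key lemma to reduce to the case where the exponent is a p-adic unit.) -/
open PowerSeries

/-- For `g ∈ 𝔽_p[[T]]` (intended to have zero constant coefficient),
`(1+g)^α := Σ_{i≥0} c(α,i)·g^i ∈ 𝔽_p[[T]]`, where `c(α,i) ∈ 𝔽_p` is the mod-`p` reduction of the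
`p`-adic binomial coefficient `C(α,i) = Ring.choose α i ∈ ℤ_p`.  Since `g^i` has order `≥ i`
when `g` has zero constant coefficient, the `n`-th coefficient of the sum is the finite sum
over `i ≤ n`. -/
noncomputable def onePlusPow (p : ℕ) [Fact p.Prime] (g : PowerSeries (ZMod p)) (α : ℤ_[p]) :
    PowerSeries (ZMod p) :=
  PowerSeries.mk fun n => ∑ i ∈ Finset.range (n + 1),
    PadicInt.toZMod (Ring.choose α i) * PowerSeries.coeff n (g ^ i)

/-!
Both sides are, coefficientwise, continuous functions of `α ∈ ℤ_p` (binomial coefficients are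
continuous and `𝔽_p` is discrete), so by density of `ℕ` in `ℤ_p` it suffices to take `α = m ∈ ℕ`.
There `(1+g)^m` is the ordinary power, and the identity is the Frobenius
`(1+g)^{p^u} = 1 + g^{p^u}` raised to the `m`-th power.
-/

instance PowerSeries.charP {R : Type*} [Semiring R] (p : ℕ) [CharP R p] : CharP R⟦X⟧ p :=
  charP_of_injective_ringHom C_injective p

theorem PowerSeries.coeff_one_add_pow {R : Type*} [CommSemiring R] {g : R⟦X⟧}
    (hg : constantCoeff g = 0) (m n : ℕ) :
    coeff n ((1 + g) ^ m) = ∑ i ∈ Finset.range (n + 1), (m.choose i : R) * coeff n (g ^ i) := by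
  have hlow : ∀ i > n, coeff n (g ^ i) = 0 := fun i hi =>
    coeff_of_lt_order n ((Nat.cast_lt.2 hi).trans_le (le_order_pow_of_constantCoeff_eq_zero i hg))
  rw [add_comm, add_pow, map_sum]
  simp only [one_pow, mul_one, ← map_natCast (C (R := R)), coeff_mul_C, mul_comm (coeff n _)]
  rw [← Finset.eventually_constant_sum (fun i hi => by simp [Nat.choose_eq_zero_of_lt hi])
      (le_max_left (m + 1) (n + 1)),
    ← Finset.eventually_constant_sum (fun i hi => by simp [hlow i hi])
      (le_max_right (m + 1) (n + 1))]

theorem PadicInt.continuous_toZMod (p : ℕ) [Fact p.Prime] :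
    Continuous (PadicInt.toZMod : ℤ_[p] → ZMod p) := by
  refine continuous_iff_continuousAt.2 fun a => (continuousAt_const (y := toZMod a)).congr ?_
  filter_upwards [Metric.ball_mem_nhds a one_pos] with x hx
  rw [eq_comm, ← sub_eq_zero, ← map_sub, ← RingHom.mem_ker, ker_toZMod,
    IsLocalRing.mem_maximalIdeal, mem_nonunits]
  simpa [dist_eq_norm] using hx

section onePlusPow

variable {p : ℕ} [Fact p.Prime]

theorem continuous_coeff_onePlusPow (g : PowerSeries (ZMod p)) (n : ℕ) :
    Continuous fun α : ℤ_[p] => coeff n (onePlusPow p g α) := by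
  simp only [onePlusPow, coeff_mk]
  exact continuous_finsetSum _ fun i _ =>
    ((PadicInt.continuous_toZMod p).comp (PadicInt.continuous_choose i)).mul continuous_const

theorem onePlusPow_natCast {g : PowerSeries (ZMod p)} (hg : constantCoeff g = 0) (m : ℕ) :
    onePlusPow p g m = (1 + g) ^ m := by
  ext n
  simp [onePlusPow, coeff_one_add_pow hg, Ring.choose_natCast]

end onePlusPow

/-- Frobenius manipulation: for `g ∈ 𝔽_p[[T]]` with zero constant coefficient,
`α ∈ ℤ_p` and `u ∈ ℕ`, one has `(1+g)^{p^u·α} = (1+g^{p^u})^α` in `𝔽_p[[T]]`. -/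
theorem onePlusPow_pow_mul (p : ℕ) [Fact p.Prime] (g : PowerSeries (ZMod p))
    (hg : PowerSeries.constantCoeff g = 0) (α : ℤ_[p]) (u : ℕ) :
    onePlusPow p g ((p : ℤ_[p]) ^ u * α) = onePlusPow p (g ^ p ^ u) α := by
  have hgp : constantCoeff (g ^ p ^ u) = 0 := by simp [hg, (Fact.out : p.Prime).ne_zero]
  have h_nat (m : ℕ) : onePlusPow p g ((p : ℤ_[p]) ^ u * m) = onePlusPow p (g ^ p ^ u) m := by
    rw [← Nat.cast_pow, ← Nat.cast_mul, onePlusPow_natCast hg, onePlusPow_natCast hgp, pow_mul,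
      add_pow_char_pow, one_pow]
  ext n
  refine congrFun (PadicInt.denseRange_natCast.equalizer
    ((continuous_coeff_onePlusPow g n).comp (continuous_const_mul _))
    (continuous_coeff_onePlusPow (g ^ p ^ u) n) (funext fun m => ?_)) α
  simp only [Function.comp_apply, h_nat]
end

section
/- Let p be a prime, f(T) ∈ ℤ_p[[T]] a power series whose constant coefficient f₀ lies in pℤ_p, let f₁ ∈ ℤ_p be the coefficient of T in f, and let α ∈ ℤ_p. If α·f₁ + 1 ∉ pℤ_p, then dim_{𝔽_p} ℤ_p[[S,T]]/I_α(f) = 1. (A uniform criterion combining the cases μ(f) = 0, λ(f) ≥ 1 of the proof of the key lemma; note α·f₁ + 1 is automatically a unit when α ∈ pℤ_p or when f₁ ∈ pℤ_p.) -/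
open PowerSeries

/-- The two-variable power series ring `ℤ_p[[S,T]]`, realized as `(ℤ_p[[T]])[[S]]`:
the outer variable `PowerSeries.X` is `S`, the inner `ℤ_p[[T]] = PowerSeries ℤ_[p]` is the
subring of series not involving `S` (included via `PowerSeries.C`), and `T` is
`C (PowerSeries.X)`. -/
abbrev Lambda (p : ℕ) [Fact p.Prime] : Type := PowerSeries (PowerSeries ℤ_[p])

/-- `(1+S)^α := Σ_{i≥0} C(α,i) S^i ∈ ℤ_p[[S,T]]`, where `C(α,i) = Ring.choose α i ∈ ℤ_p` is the
`p`-adic binomial coefficient `α(α−1)⋯(α−i+1)/i!`. -/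
noncomputable def onePlusSPow (p : ℕ) [Fact p.Prime] (α : ℤ_[p]) : Lambda p :=
  PowerSeries.mk fun i => PowerSeries.C (Ring.choose α i)

/-- The variable `T` of `ℤ_p[[S,T]]`. -/
noncomputable def Tvar (p : ℕ) [Fact p.Prime] : Lambda p :=
  PowerSeries.C (R := PowerSeries ℤ_[p]) PowerSeries.X

/-- The ideal `I_α(f) = ((1+S)^α(1+T) − 1, S − f(T), p)` of `ℤ_p[[S,T]]`. -/
noncomputable def Ialpha (p : ℕ) [Fact p.Prime] (f : PowerSeries ℤ_[p]) (α : ℤ_[p]) :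
    Ideal (Lambda p) :=
  Ideal.span {onePlusSPow p α * (1 + Tvar p) - 1,
    PowerSeries.X - PowerSeries.C (R := PowerSeries ℤ_[p]) f, (p : Lambda p)}

lemma p_mem_Ialpha (p : ℕ) [Fact p.Prime] (f : PowerSeries ℤ_[p]) (α : ℤ_[p]) :
    (p : Lambda p) ∈ Ialpha p f α :=
  Ideal.subset_span (by simp)

/-- The dimension of `R/I` as an `𝔽_p = ZMod p` vector space, for an ideal `I` of `R`
containing `p` (so that the quotient ring is naturally an `𝔽_p`-vector space). -/
noncomputable def fpDim (p : ℕ) {R : Type} [CommRing R] (I : Ideal R)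
    (h : (p : R) ∈ I) : Cardinal :=
  letI : Module (ZMod p) (R ⧸ I) := AddCommGroup.zmodModule (fun x => by
    obtain ⟨y, rfl⟩ := Ideal.Quotient.mk_surjective x
    rw [← map_nsmul, nsmul_eq_mul]
    exact Ideal.Quotient.eq_zero_iff_mem.mpr (I.mul_mem_right y h))
  Module.rank (ZMod p) (R ⧸ I)

/-! Modulo `I_α(f)` we have `p = 0` and `S = f(T) = T·h(T)` with `h = (f - f₀)/T`. Expanding
`(1+S)^α = 1 + αS + S²r` turns the first generator into `T·u` with `u ≡ 1 + α·h(0) = α·f₁ + 1`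
modulo `(S, T, p)`, a unit. Hence `T ∈ I_α(f)`, then `S ∈ I_α(f)`, so `I_α(f) = (S, T, p)`, the
kernel of the residue map `ℤ_p[[S,T]] → 𝔽_p`. -/

namespace PowerSeries

variable {R : Type*} [CommSemiring R]

theorem mem_of_X_mem_of_C_constantCoeff_mem {J : Ideal R⟦X⟧} (hX : X ∈ J) {g : R⟦X⟧}
    (hg : C (constantCoeff g) ∈ J) : g ∈ J := by
  rw [eq_shift_mul_X_add_const g]
  exact J.add_mem (J.mul_mem_left _ hX) hg

theorem ker_comp_constantCoeff_constantCoeff_le {K : Type*} [Semiring K] (φ : R →+* K)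
    {J : Ideal R⟦X⟧⟦X⟧} (hS : X ∈ J) (hT : C X ∈ J) (hφ : ∀ a ∈ RingHom.ker φ, C (C a) ∈ J) :
    RingHom.ker (φ.comp (constantCoeff.comp constantCoeff)) ≤ J := fun g hg =>
  mem_of_X_mem_of_C_constantCoeff_mem hS <|
    show constantCoeff g ∈ J.comap C from mem_of_X_mem_of_C_constantCoeff_mem hT (hφ _ hg)

end PowerSeries

theorem PadicInt.toZMod_eq_zero_iff {p : ℕ} [Fact p.Prime] {x : ℤ_[p]} :
    PadicInt.toZMod x = 0 ↔ x ∈ Ideal.span {(p : ℤ_[p])} := by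
  rw [← RingHom.mem_ker, PadicInt.ker_toZMod, PadicInt.maximalIdeal_eq_span_p]

theorem rank_zmod_eq_one_of_addEquiv (p : ℕ) [Nontrivial (ZMod p)] {M : Type} [AddCommGroup M]
    [Module (ZMod p) M] (e : M ≃+ ZMod p) : Module.rank (ZMod p) M = 1 :=
  (LinearEquiv.ofBijective (e.toAddMonoidHom.toZModLinearMap p) e.bijective).rank_eq.trans
    (Module.rank_self _)

theorem fpDim_eq_one_of_addEquiv (p : ℕ) [Nontrivial (ZMod p)] {R : Type} [CommRing R]
    {I : Ideal R} (h : (p : R) ∈ I) (e : (R ⧸ I) ≃+ ZMod p) : fpDim p I h = 1 := by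
  unfold fpDim
  -- the `ZMod p`-module structure inside `fpDim` is not an instance, so it is found by unification
  refine @rank_zmod_eq_one_of_addEquiv p _ (R ⧸ I) _ ?_ e

section Ialpha

variable (p : ℕ) [Fact p.Prime]

noncomputable def residueMap : Lambda p →+* ZMod p :=
  PadicInt.toZMod.comp (constantCoeff.comp constantCoeff)

theorem residueMap_surjective : Function.Surjective (residueMap p) := fun z =>
  ⟨C (C (z.val : ℤ_[p])), by simp [residueMap]⟩

theorem onePlusSPow_eq (α : ℤ_[p]) :
    onePlusSPow p α = 1 + C (C α) * X + X ^ 2 * mk fun i => C (Ring.choose α (i + 2)) := by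
  ext1 n
  rcases n with _ | _ | n <;> simp [onePlusSPow, coeff_X_pow_mul', coeff_one]

theorem C_C_mem_of_mem_span_p {J : Ideal (Lambda p)} (hp : (p : Lambda p) ∈ J) {a : ℤ_[p]}
    (ha : a ∈ Ideal.span {(p : ℤ_[p])}) : C (C a) ∈ J := by
  obtain ⟨b, rfl⟩ := Ideal.mem_span_singleton.mp ha
  simpa using J.mul_mem_right (C (C b)) hp

variable {p} {f : ℤ_[p]⟦X⟧} {α : ℤ_[p]}

theorem Ialpha_le_ker_residueMap (hf0 : constantCoeff f ∈ Ideal.span {(p : ℤ_[p])}) :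
    Ialpha p f α ≤ RingHom.ker (residueMap p) := by
  rw [Ialpha, Ideal.span_le]
  rintro x (rfl | rfl | rfl) <;> simp [residueMap, onePlusSPow, Tvar,
    PadicInt.toZMod_eq_zero_iff.mpr hf0]

theorem Tvar_mem_Ialpha (hf0 : constantCoeff f ∈ Ideal.span {(p : ℤ_[p])})
    (hα : α * coeff 1 f + 1 ∉ Ideal.span {(p : ℤ_[p])}) : Tvar p ∈ Ialpha p f α := by
  obtain ⟨b, hb⟩ := Ideal.mem_span_singleton.mp hf0
  set h : ℤ_[p]⟦X⟧ := mk fun i => coeff (i + 1) f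
  set r : Lambda p := mk fun i => C (Ring.choose α (i + 2))
  set u : Lambda p := 1 + C (C α) * C h * (1 + Tvar p) + C h ^ 2 * Tvar p * r * (1 + Tvar p)
  set A : Lambda p := (1 + Tvar p) * (C (C α) + r * (X + C h * Tvar p))
  have hu : IsUnit u := by
    have hu0 : constantCoeff (constantCoeff u) = α * coeff 1 f + 1 := by
      simp [u, h, Tvar, add_comm]
    rw [isUnit_iff_constantCoeff, isUnit_iff_constantCoeff, hu0,
      ← IsLocalRing.notMem_maximalIdeal, PadicInt.maximalIdeal_eq_span_p]
    exact hα
  have hCf : C f = C h * Tvar p + (p : Lambda p) * C (C b) := by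
    conv_lhs => rw [eq_shift_mul_X_add_const f, hb]
    simp [Tvar, h]
  -- `(1+S)^α(1+T) - 1 = T·u + A·(S - h(T)·T)` and `S - h(T)·T ≡ S - f(T) mod p`
  have hTu : Tvar p * u = (onePlusSPow p α * (1 + Tvar p) - 1) - A * (X - C f)
      - A * C (C b) * (p : Lambda p) := by
    rw [onePlusSPow_eq]
    linear_combination (-A) * hCf
  rw [← Ideal.mul_unit_mem_iff_mem _ hu, hTu]
  refine sub_mem (sub_mem ?_ (Ideal.mul_mem_left _ _ ?_)) (Ideal.mul_mem_left _ _ ?_) <;>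
    exact Ideal.subset_span (by simp)

theorem X_mem_Ialpha (hf0 : constantCoeff f ∈ Ideal.span {(p : ℤ_[p])})
    (hα : α * coeff 1 f + 1 ∉ Ideal.span {(p : ℤ_[p])}) : X ∈ Ialpha p f α := by
  have hCf : C f ∈ Ialpha p f α :=
    PowerSeries.mem_of_X_mem_of_C_constantCoeff_mem (J := (Ialpha p f α).comap C)
      (Tvar_mem_Ialpha hf0 hα) (C_C_mem_of_mem_span_p p (p_mem_Ialpha p f α) hf0)
  simpa using (Ialpha p f α).add_mem (Ideal.subset_span (by simp) : X - C f ∈ Ialpha p f α) hCf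

theorem Ialpha_eq_ker_residueMap (hf0 : constantCoeff f ∈ Ideal.span {(p : ℤ_[p])})
    (hα : α * coeff 1 f + 1 ∉ Ideal.span {(p : ℤ_[p])}) :
    Ialpha p f α = RingHom.ker (residueMap p) :=
  le_antisymm (Ialpha_le_ker_residueMap hf0) <|
    PowerSeries.ker_comp_constantCoeff_constantCoeff_le _ (X_mem_Ialpha hf0 hα)
      (Tvar_mem_Ialpha hf0 hα) fun _ ha =>
        C_C_mem_of_mem_span_p p (p_mem_Ialpha p f α) (PadicInt.toZMod_eq_zero_iff.mp ha)

end Ialpha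

/-- if the constant coefficient `f₀` of `f` lies in `pℤ_p` and
`α·f₁ + 1 ∉ pℤ_p` (where `f₁` is the coefficient of `T` in `f`), then
`dim_{𝔽_p} ℤ_p[[S,T]]/I_α(f) = 1`. -/
theorem fpDim_Ialpha_eq_one (p : ℕ) [Fact p.Prime] (f : PowerSeries ℤ_[p])
    (hf0 : PowerSeries.constantCoeff (R := ℤ_[p]) f ∈ Ideal.span {(p : ℤ_[p])}) (α : ℤ_[p])
    (hα : α * PowerSeries.coeff (R := ℤ_[p]) 1 f + 1 ∉ Ideal.span {(p : ℤ_[p])}) :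
    fpDim p (Ialpha p f α) (p_mem_Ialpha p f α) = 1 :=
  fpDim_eq_one_of_addEquiv p _ <|
    ((Ideal.quotEquivOfEq (Ialpha_eq_ker_residueMap hf0 hα)).trans
      (RingHom.quotientKerEquivOfSurjective (residueMap_surjective p))).toAddEquiv
end
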